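/- Let μ be a valuation on K[x] and Q a key polynomial for μ. Let G_Q be the graded ring of the truncated valuation μ_Q, R_Q the subring of G_Q generated by initial forms in_Q(f) of polynomials f with deg(f) < deg(Q), and y_Q = in_Q(Q). Then R_Q is a subring of G_Q, y_Q is transcendental over R_Q, and G_Q = R_Q[y_Q]. -/

import Mathlib

/-!
Parts (2) and (3) are bookkeeping: `Q`-expansions exist by repeated division by the monic `Q`,
and a single term `c Q^ℓ` is its own `Q`-expansion, so the truncation of a `Q`-expansion is the
minimum of the truncations of its terms.

The content is (1). Choose a root `b` of `Q` in `K̄` with `μ̄(x - b) = ε(Q)`. A root `a` of a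
polynomial of degree `< deg Q` has `μ̄(x - a) < ε(Q)`, so `x - a = (b - a) + (x - b)` has the
constant `b - a` as initial form; multiplying, `f g` has the same initial form as the constant
`(f g)(b)`, and so has `c₀ = f g mod Q`, as `c₀(b) = (f g)(b)`. Hence `μ(f g - c₀) > μ(c₀)`.
-/

open Polynomial

/-- An (additive, Krull) valuation on a commutative ring `R`, with values in `WithTop Γ`
for a linearly ordered abelian group `Γ`.  (`⊤` plays the role of `∞`; elements of the
support may have value `∞`.) -/
structure AddVal (R : Type*) [CommRing R] (Γ : Type*) [AddCommGroup Γ] [LinearOrder Γ] [IsOrderedAddMonoid Γ] where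
  v : R → WithTop Γ
  v_zero : v 0 = ⊤
  v_one : v 1 = 0
  v_mul : ∀ f g : R, v (f * g) = v f + v g
  v_add : ∀ f g : R, min (v f) (v g) ≤ v (f + g)

/-- `c 0, …, c r` is the `q`-expansion of `f`: all coefficients have degree smaller than
`deg q` and `f = Σ_{ℓ=0}^r c ℓ * q^ℓ`. -/
def IsQExpansion {K : Type*} [Field K] (q f : Polynomial K) (r : ℕ)
    (c : ℕ → Polynomial K) : Prop :=
  (∀ ℓ, (c ℓ).degree < q.degree) ∧ f = ∑ ℓ ∈ Finset.range (r + 1), c ℓ * q ^ ℓ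

/-- `w f` coincides with the truncation `w_q f`, i.e. with the minimum of the values of
the terms of the `q`-expansion of `f`. -/
def TruncEq {K Γ : Type*} [Field K] [AddCommGroup Γ] [LinearOrder Γ] [IsOrderedAddMonoid Γ]
    (w : Polynomial K → WithTop Γ) (q f : Polynomial K) : Prop :=
  ∃ r c, IsQExpansion q f r c ∧
    w f = (Finset.range (r + 1)).inf fun ℓ => w (c ℓ * q ^ ℓ)

/-- A family `Q` of polynomials is a complete set for `w`: every nonzero `f` admits some
`Q i` of degree at most `deg f` with `w f = w_{Q i} f`. -/
def IsCompleteSet {K Γ I : Type*} [Field K] [AddCommGroup Γ] [LinearOrder Γ] [IsOrderedAddMonoid Γ]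
    (w : Polynomial K → WithTop Γ) (Q : I → Polynomial K) : Prop :=
  ∀ f : Polynomial K, f ≠ 0 → ∃ i, (Q i).degree ≤ f.degree ∧ TruncEq w (Q i) f

/-- The monomial `Q^λ = ∏ᵢ (Q i)^(λ i)` attached to a finitely supported multi-index. -/
noncomputable def Qpow {K I : Type*} [Field K] (Q : I → Polynomial K) (l : I →₀ ℕ) : Polynomial K :=
  l.prod fun i n => Q i ^ n

/-- The value group `vL` of a valued field `(L, v)`, as a subgroup of `Γ`. -/
def valueGroupL {L Γ : Type*} [Field L] [AddCommGroup Γ] [LinearOrder Γ] [IsOrderedAddMonoid Γ]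
    (v : AddVal L Γ) : AddSubgroup Γ :=
  AddSubgroup.closure {γ : Γ | ∃ b : L, b ≠ 0 ∧ v.v b = (γ : WithTop Γ)}

/-- The value group `vK` of the restriction of `v` to a subfield `K` of `L`,
as a subgroup of `Γ`. -/
def valueGroupK (K : Type*) {L Γ : Type*} [Field K] [Field L] [Algebra K L]
    [AddCommGroup Γ] [LinearOrder Γ] [IsOrderedAddMonoid Γ] (v : AddVal L Γ) : AddSubgroup Γ :=
  AddSubgroup.closure {γ : Γ | ∃ a : K, a ≠ 0 ∧ v.v (algebraMap K L a) = (γ : WithTop Γ)}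

/-- The ramification index `e(L/K, v) = (vL : vK)`. -/
noncomputable def ramIndex (K : Type*) {L Γ : Type*} [Field K] [Field L] [Algebra K L]
    [AddCommGroup Γ] [LinearOrder Γ] [IsOrderedAddMonoid Γ] (v : AddVal L Γ) : ℕ :=
  (valueGroupK K v).relIndex (valueGroupL v)

/-- The initial index `ε(L/K, v) = |{γ ∈ vL | 0 ≤ γ < (vK)_{>0}}|`. -/
noncomputable def initIndex (K : Type*) {L Γ : Type*} [Field K] [Field L] [Algebra K L]
    [AddCommGroup Γ] [LinearOrder Γ] [IsOrderedAddMonoid Γ] (v : AddVal L Γ) : ℕ :=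
  Nat.card {γ : Γ | γ ∈ valueGroupL v ∧ 0 ≤ γ ∧ ∀ δ ∈ valueGroupK K v, 0 < δ → γ < δ}

/-- `γ` is the value `ε(F) = max {μ̄(x - a) : a a root of F}` for a polynomial `F` over an
algebraically closed field, with respect to a valuation `μ̄` of `K̄[x]`. -/
def IsEpsVal {Kb Γ : Type*} [Field Kb] [AddCommGroup Γ] [LinearOrder Γ] [IsOrderedAddMonoid Γ]
    (μb : AddVal (Polynomial Kb) Γ) (F : Polynomial Kb) (γ : WithTop Γ) : Prop :=
  (∃ a : Kb, F.IsRoot a ∧ μb.v (Polynomial.X - Polynomial.C a) = γ) ∧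
    ∀ a : Kb, F.IsRoot a → μb.v (Polynomial.X - Polynomial.C a) ≤ γ

/-- `Q ∈ K[x]` is a key polynomial for the valuation `μ` of `K[x]` (whose extension to
`K̄[x]` is `μb`): `Q` is monic, nonconstant, and `deg f < deg Q` implies `ε(f) < ε(Q)`. -/
def IsKeyPoly {K Kb Γ : Type*} [Field K] [Field Kb] [Algebra K Kb]
    [AddCommGroup Γ] [LinearOrder Γ] [IsOrderedAddMonoid Γ]
    (μb : AddVal (Polynomial Kb) Γ) (Q : Polynomial K) : Prop :=
  Q.Monic ∧ 0 < Q.degree ∧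
    ∀ f : Polynomial K, f.degree < Q.degree →
      ∀ γf γQ : WithTop Γ,
        IsEpsVal μb (f.map (algebraMap K Kb)) γf →
        IsEpsVal μb (Q.map (algebraMap K Kb)) γQ → γf < γQ

/-- Two polynomials have the same initial form in the graded ring of the valuation `w`:
they have the same value and their difference has strictly bigger value (or they are
equal). -/
def InEq {K Γ : Type*} [Field K] [AddCommGroup Γ] [LinearOrder Γ] [IsOrderedAddMonoid Γ]
    (w : Polynomial K → WithTop Γ) (f g : Polynomial K) : Prop :=
  w f = w g ∧ (f ≠ g → w f < w (f - g))

namespace AddVal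

variable {R Γ : Type*} [CommRing R] [AddCommGroup Γ] [LinearOrder Γ] [IsOrderedAddMonoid Γ]

def toAddValuation (μ : AddVal R Γ) : AddValuation R (WithTop Γ) :=
  AddValuation.of μ.v μ.v_zero μ.v_one μ.v_add μ.v_mul

end AddVal

namespace AddValuation

section CommRing

variable {R Γ : Type*} [CommRing R] [AddCommGroup Γ] [LinearOrder Γ] [IsOrderedAddMonoid Γ]
  (v : AddValuation R (WithTop Γ))

theorem map_ne_top_of_isUnit {x : R} (hx : IsUnit x) : v x ≠ ⊤ := by
  obtain ⟨u, rfl⟩ := hx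
  intro h
  have := v.map_mul u ↑u⁻¹
  rw [Units.mul_inv, v.map_one, h, WithTop.top_add] at this
  exact WithTop.zero_ne_top this

/-- Initial forms multiply: if `in(x) = in(a)` and `in(y) = in(b)` then `in(x y) = in(a b)`. -/
theorem lt_map_mul_sub_mul {x y a b : R} (hx : v a < v (x - a)) (hy : v b < v (y - b)) :
    v (a * b) < v (x * y - a * b) := by
  have hsplit : x * y - a * b = (x - a) * y + a * (y - b) := by ring
  rw [hsplit, v.map_mul]
  apply v.map_lt_add
  · rw [v.map_mul, v.map_eq_of_lt_sub hy]
    exact WithTop.add_lt_add_right hy.ne_top hx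
  · rw [v.map_mul]
    exact WithTop.add_lt_add_left hx.ne_top hy

theorem lt_map_prod_sub_prod {ι : Type*} (s : Multiset ι) (x a : ι → R)
    (h : ∀ i ∈ s, v (a i) < v (x i - a i)) :
    v (s.map a).prod < v ((s.map x).prod - (s.map a).prod) := by
  induction s using Multiset.induction_on with
  | empty => simp
  | cons i s ih =>
    simp only [Multiset.map_cons, Multiset.prod_cons]
    exact v.lt_map_mul_sub_mul (h i (Multiset.mem_cons_self i s))
      (ih fun j hj => h j (Multiset.mem_cons_of_mem hj))

end CommRing

section IsAlgClosed

variable {K Γ : Type*} [Field K] [IsAlgClosed K] [AddCommGroup Γ] [LinearOrder Γ]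
  [IsOrderedAddMonoid Γ] (v : AddValuation K[X] (WithTop Γ))

theorem lt_map_sub_C_eval {p : K[X]} (hp : p ≠ 0) {b : K}
    (hroots : ∀ a ∈ p.roots, v (X - C a) < v (X - C b)) :
    v (C (p.eval b)) < v (p - C (p.eval b)) := by
  have hfac : C p.leadingCoeff * (p.roots.map fun a => X - C a).prod = p :=
    C_leadingCoeff_mul_prod_multiset_X_sub_C IsAlgClosed.card_roots_eq_natDegree
  have heval : C (p.eval b) = C p.leadingCoeff * (p.roots.map fun a => C (b - a)).prod := by
    conv_lhs => rw [← hfac]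
    simp [eval_multiset_prod, map_multiset_prod, Multiset.map_map]
  have hlc : v (C p.leadingCoeff) < v (C p.leadingCoeff - C p.leadingCoeff) := by
    rw [sub_self, v.map_zero, lt_top_iff_ne_top]
    exact v.map_ne_top_of_isUnit (isUnit_C.mpr (leadingCoeff_ne_zero.mpr hp).isUnit)
  have hfactors : ∀ a ∈ p.roots, v (C (b - a)) < v ((X - C a) - C (b - a)) := by
    intro a ha
    have hdiff : C (b - a) = (X - C a) - (X - C b) := by rw [C_sub]; ring
    rw [hdiff, v.map_sub_eq_of_lt_left (hroots a ha), sub_sub_cancel]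
    exact hroots a ha
  have := v.lt_map_mul_sub_mul hlc (v.lt_map_prod_sub_prod _ _ _ hfactors)
  rwa [hfac, ← heval] at this

theorem lt_map_sub_of_eval_eq {F G : K[X]} (hF : F ≠ 0) {b : K}
    (hFroots : ∀ a ∈ F.roots, v (X - C a) < v (X - C b))
    (hGroots : ∀ a ∈ G.roots, v (X - C a) < v (X - C b)) (heval : F.eval b = G.eval b) :
    v G < v (F - G) := by
  have hFb := v.lt_map_sub_C_eval hF hFroots
  have hG : G ≠ 0 := by
    rintro rfl
    rw [eval_zero] at heval
    rw [heval, C_0, v.map_zero] at hFb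
    exact not_top_lt hFb
  have hGb := v.lt_map_sub_C_eval hG hGroots
  rw [← heval] at hGb
  rw [v.map_eq_of_lt_sub hGb,
    show F - G = (F - C (F.eval b)) - (G - C (F.eval b)) by ring]
  exact (lt_min hFb hGb).trans_le (v.map_sub _ _)

end IsAlgClosed

end AddValuation

theorem Polynomial.degree_mul_divByMonic_lt {R : Type*} [CommRing R] {f g Q : R[X]}
    (hQ : Q.Monic) (hf : f.degree < Q.degree) (hg : g.degree < Q.degree) :
    (f * g /ₘ Q).degree < Q.degree := by
  by_cases h : f * g /ₘ Q = 0
  · rw [h, degree_zero]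
    exact bot_le.trans_lt hf
  have hf0 : f ≠ 0 := by rintro rfl; simp at h
  have hg0 : g ≠ 0 := by rintro rfl; simp at h
  apply degree_lt_degree
  have := natDegree_lt_natDegree hf0 hf
  have := natDegree_lt_natDegree hg0 hg
  have := natDegree_mul_le (p := f) (q := g)
  rw [natDegree_divByMonic _ hQ]
  omega

theorem exists_isQExpansion_of_natDegree_le {K : Type*} [Field K] {Q : K[X]} (hQ : Q.Monic)
    (hdeg : 0 < Q.degree) {n : ℕ} {f : K[X]} (hf : f.natDegree ≤ n) :
    ∃ c, IsQExpansion Q f n c := by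
  induction n generalizing f with
  | zero =>
    refine ⟨fun _ => f, fun _ => (degree_le_of_natDegree_le hf).trans_lt ?_, by simp⟩
    exact_mod_cast hdeg
  | succ n ih =>
    have hQnat : 0 < Q.natDegree := natDegree_pos_iff_degree_pos.mpr hdeg
    obtain ⟨c, hc, hsum⟩ := ih (f := f /ₘ Q) (by rw [natDegree_divByMonic _ hQ]; omega)
    refine ⟨fun | 0 => f %ₘ Q | ℓ + 1 => c ℓ, ?_, ?_⟩
    · rintro (_ | ℓ)
      exacts [degree_modByMonic_lt _ hQ, hc ℓ]
    · conv_lhs => rw [← modByMonic_add_div f Q, hsum]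
      rw [Finset.sum_range_succ' _ (n + 1), Finset.mul_sum]
      simp [pow_succ, mul_comm, mul_left_comm, add_comm]

section KeyPolynomial

variable {K Kb Γ : Type*} [Field K] [Field Kb] [Algebra K Kb]
  [AddCommGroup Γ] [LinearOrder Γ] [IsOrderedAddMonoid Γ]

theorem exists_isEpsVal (μb : AddVal Kb[X] Γ) {F : Kb[X]} (hF : F ≠ 0) {a : Kb}
    (ha : F.IsRoot a) : ∃ γ, IsEpsVal μb F γ := by
  classical
  obtain ⟨b, hb, hmax⟩ := F.roots.toFinset.exists_max_image (fun a => μb.v (X - C a))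
    ⟨a, by simpa [hF] using ha⟩
  rw [Multiset.mem_toFinset, mem_roots hF] at hb
  exact ⟨_, ⟨b, hb, rfl⟩, fun c hc => hmax c (by simpa [hF] using hc)⟩

/-- `b` is a root of `Q` realising `ε(Q)`. -/
theorem IsKeyPoly.exists_root [IsAlgClosed Kb] {μb : AddVal Kb[X] Γ} {Q : K[X]}
    (hQ : IsKeyPoly μb Q) :
    ∃ b, (Q.map (algebraMap K Kb)).IsRoot b ∧ ∀ p : K[X], p.degree < Q.degree →
      ∀ a ∈ (p.map (algebraMap K Kb)).roots, μb.v (X - C a) < μb.v (X - C b) := by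
  obtain ⟨hmonic, hdeg, hε⟩ := hQ
  obtain ⟨b₀, hb₀⟩ := IsAlgClosed.exists_root (Q.map (algebraMap K Kb))
    (by rw [degree_map]; exact hdeg.ne')
  obtain ⟨δ, hεQ⟩ := exists_isEpsVal μb (hmonic.map _).ne_zero hb₀
  obtain ⟨b, hb, hbδ⟩ := hεQ.1
  refine ⟨b, hb, fun p hp a ha => ?_⟩
  obtain ⟨γ, hεp⟩ := exists_isEpsVal μb (ne_zero_of_mem_roots ha) (isRoot_of_mem_roots ha)
  rw [hbδ]
  exact (hεp.2 a (isRoot_of_mem_roots ha)).trans_lt (hε p hp γ δ hεp hεQ)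

theorem IsKeyPoly.v_mul_modByMonic_lt_v_sub [IsAlgClosed Kb] {μ : AddVal K[X] Γ}
    {μb : AddVal Kb[X] Γ}
    (hext : ∀ f : K[X], μb.v (f.map (algebraMap K Kb)) = μ.v f) {Q : K[X]}
    (hQ : IsKeyPoly μb Q) {f g : K[X]} (hf : f.degree < Q.degree) (hg : g.degree < Q.degree)
    (hfg : f * g ≠ 0) :
    μ.v (f * g %ₘ Q) < μ.v (f * g - f * g %ₘ Q) := by
  obtain ⟨b, hb, hroots⟩ := hQ.exists_root
  have hF : (f * g).map (algebraMap K Kb) ≠ 0 :=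
    (Polynomial.map_ne_zero_iff (algebraMap K Kb).injective).mpr hfg
  have hFroots : ∀ a ∈ ((f * g).map (algebraMap K Kb)).roots,
      μb.v (X - C a) < μb.v (X - C b) := by
    intro a ha
    rw [Polynomial.map_mul] at hF ha
    rw [roots_mul hF, Multiset.mem_add] at ha
    exact ha.elim (hroots f hf a) (hroots g hg a)
  have heval : ((f * g).map (algebraMap K Kb)).eval b =
      ((f * g %ₘ Q).map (algebraMap K Kb)).eval b := by
    conv_lhs => rw [← modByMonic_add_div (f * g) Q]
    rw [Polynomial.map_add, Polynomial.map_mul, eval_add, eval_mul, hb.eq_zero, zero_mul, add_zero]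
  rw [← hext, ← hext, Polynomial.map_sub]
  exact μb.toAddValuation.lt_map_sub_of_eval_eq hF hFroots
    (hroots _ (degree_modByMonic_lt _ hQ.1)) heval

end KeyPolynomial

/-- `w` is the truncation `μ_Q` of `μ` at `Q`. -/
def IsTruncation {K Γ : Type*} [Field K] [AddCommGroup Γ] [LinearOrder Γ] [IsOrderedAddMonoid Γ]
    (μ : AddVal K[X] Γ) (Q : K[X]) (w : K[X] → WithTop Γ) : Prop :=
  ∀ (f : K[X]) (r : ℕ) (c : ℕ → K[X]), IsQExpansion Q f r c →
    w f = (Finset.range (r + 1)).inf fun ℓ => μ.v (c ℓ * Q ^ ℓ)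

namespace IsTruncation

variable {K Γ : Type*} [Field K] [AddCommGroup Γ] [LinearOrder Γ] [IsOrderedAddMonoid Γ]
  {μ : AddVal K[X] Γ} {Q : K[X]} {w : K[X] → WithTop Γ}

theorem apply_mul_pow (hw : IsTruncation μ Q w) {c : K[X]} (hc : c.degree < Q.degree) (ℓ : ℕ) :
    w (c * Q ^ ℓ) = μ.v (c * Q ^ ℓ) := by
  classical
  have hexp : IsQExpansion Q (c * Q ^ ℓ) ℓ (Pi.single ℓ c) := by
    refine ⟨fun j => ?_, by simp [Pi.single_apply]⟩
    by_cases hj : j = ℓ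
    · simpa [hj] using hc
    · simpa [hj] using bot_le.trans_lt hc
  rw [hw _ _ _ hexp, Finset.range_add_one, Finset.inf_insert, Pi.single_eq_same, inf_eq_left]
  refine Finset.le_inf fun j hj => ?_
  rw [Pi.single_eq_of_ne (Finset.mem_range.mp hj).ne, zero_mul, μ.v_zero]
  exact le_top

theorem apply_of_degree_lt (hw : IsTruncation μ Q w) {c : K[X]} (hc : c.degree < Q.degree) :
    w c = μ.v c := by
  simpa using hw.apply_mul_pow hc 0

theorem eq_inf_of_isQExpansion (hw : IsTruncation μ Q w) {f : K[X]} {r : ℕ} {c : ℕ → K[X]}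
    (h : IsQExpansion Q f r c) :
    w f = (Finset.range (r + 1)).inf fun ℓ => w (c ℓ * Q ^ ℓ) := by
  rw [hw f r c h]
  exact Finset.inf_congr rfl fun ℓ _ => (hw.apply_mul_pow (h.1 ℓ) ℓ).symm

theorem inEq_mul_modByMonic {Kb : Type*} [Field Kb] [Algebra K Kb] [IsAlgClosed Kb]
    {μb : AddVal Kb[X] Γ} (hw : IsTruncation μ Q w)
    (hext : ∀ f : K[X], μb.v (f.map (algebraMap K Kb)) = μ.v f) (hQ : IsKeyPoly μb Q)
    {f g : K[X]} (hf : f.degree < Q.degree) (hg : g.degree < Q.degree) :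
    InEq w (f * g) (f * g %ₘ Q) := by
  by_cases hfg : f * g = 0
  · rw [hfg, zero_modByMonic]
    exact ⟨rfl, fun h => (h rfl).elim⟩
  have hlt := hQ.v_mul_modByMonic_lt_v_sub hext hf hg hfg
  set c₀ := f * g %ₘ Q
  set c₁ := f * g /ₘ Q
  have hc₀ : c₀.degree < Q.degree := degree_modByMonic_lt _ hQ.1
  have hc₁ : c₁.degree < Q.degree := degree_mul_divByMonic_lt hQ.1 hf hg
  have hdiff : f * g - c₀ = c₁ * Q := by
    rw [sub_eq_iff_eq_add', mul_comm c₁]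
    exact (modByMonic_add_div _ _).symm
  have hexp : IsQExpansion Q (f * g) 1 fun | 0 => c₀ | _ + 1 => c₁ := by
    refine ⟨by rintro (_ | _) <;> assumption, ?_⟩
    simp [Finset.sum_range_succ, ← hdiff]
  have hw_fg : w (f * g) = μ.v c₀ := by
    rw [hw _ _ _ hexp]
    simp [Finset.range_add_one, ← hdiff, hlt.le]
  refine ⟨by rw [hw_fg, hw.apply_of_degree_lt hc₀], fun _ => ?_⟩
  rwa [hw_fg, hdiff, ← pow_one Q, hw.apply_mul_pow hc₁, pow_one, ← hdiff]

end IsTruncation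

/-- Conjunct (1) says that `R_Q` is closed under products, (2) that `y_Q` satisfies no
nontrivial relation over `R_Q`, and (3) that every initial form lies in `R_Q[y_Q]`. -/
theorem gradedRing_of_truncation
    {K Kb Γ : Type*} [Field K] [Field Kb] [Algebra K Kb] [IsAlgClosure K Kb]
    [AddCommGroup Γ] [LinearOrder Γ] [IsOrderedAddMonoid Γ]
    (μ : AddVal (Polynomial K) Γ) (μb : AddVal (Polynomial Kb) Γ)
    (hext : ∀ f : Polynomial K, μb.v (f.map (algebraMap K Kb)) = μ.v f)
    (Q : Polynomial K) (hkey : IsKeyPoly μb Q)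
    (w : Polynomial K → WithTop Γ)
    (hw : ∀ (f : Polynomial K) (r : ℕ) (c : ℕ → Polynomial K), IsQExpansion Q f r c →
      w f = (Finset.range (r + 1)).inf fun ℓ => μ.v (c ℓ * Q ^ ℓ)) :
    (∀ f g : Polynomial K, f.degree < Q.degree → g.degree < Q.degree →
      ∃ h : Polynomial K, h.degree < Q.degree ∧ InEq w (f * g) h) ∧
    (∀ (s : ℕ) (c : ℕ → Polynomial K), (∀ ℓ, (c ℓ).degree < Q.degree) →
      w (∑ ℓ ∈ Finset.range (s + 1), c ℓ * Q ^ ℓ) =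
        (Finset.range (s + 1)).inf fun ℓ => w (c ℓ * Q ^ ℓ)) ∧
    (∀ f : Polynomial K, ∃ (s : ℕ) (c : ℕ → Polynomial K),
      (∀ ℓ, (c ℓ).degree < Q.degree) ∧
      f = ∑ ℓ ∈ Finset.range (s + 1), c ℓ * Q ^ ℓ ∧
      w f = (Finset.range (s + 1)).inf fun ℓ => w (c ℓ * Q ^ ℓ)) := by
  have : IsAlgClosed Kb := IsAlgClosure.isAlgClosed K
  have hw : IsTruncation μ Q w := hw
  refine ⟨fun f g hf hg =>
      ⟨_, degree_modByMonic_lt _ hkey.1, hw.inEq_mul_modByMonic hext hkey hf hg⟩,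
    fun s c hc => hw.eq_inf_of_isQExpansion ⟨hc, rfl⟩, fun f => ?_⟩
  obtain ⟨c, hc⟩ := exists_isQExpansion_of_natDegree_le hkey.1 hkey.2.1 (le_refl f.natDegree)
  exact ⟨_, c, hc.1, hc.2, hw.eq_inf_of_isQExpansion hc⟩
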